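/- arXiv:2306.02192 — 4 statements merged into one kernel-verified Lean document; each statement's English description precedes it below -/
import Mathlib

section
/- Let L ≥ 4 be an integer, h = 1/L, and let f : ℝ^d × ℝ^n → ℝ^d and g : ℝ^d → ℝ be continuously differentiable. Fix an input x ∈ ℝ^d and target y ∈ ℝ. For weights Θ = (θ_0,…,θ_{L−1}) ∈ (ℝ^n)^L define the Leapfrog network states z_0 = x, z_1 = z_0 + h f(z_0, θ_0), z_{l+2} = z_l + 2h f(z_{l+1}, θ_{l+1}) for l = 0,…,L−2, and the loss E(Θ) = (1/2)|g(z_L) − y|². Define the back-propagator vectors p_0,…,p_{L−1} ∈ ℝ^d backward by p_{L−1}ᵀ = 2(g(z_L) − y)∇g(z_L)ᵀ, p_{L−2}ᵀ = 2h p_{L−1}ᵀ ∂_z f(z_{L−1}, θ_{L−1}), p_lᵀ = p_{l+2}ᵀ + 2h p_{l+1}ᵀ ∂_z f(z_{l+1}, θ_{l+1}) for l = L−3,…,1, and p_0ᵀ = (1/2)p_2ᵀ + h p_1ᵀ ∂_z f(z_1, θ_1). Then for every l = 0,1,…,L−1 the partial gradient of E with respect to θ_l satisfies L ∂_{θ_l}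 E = p_lᵀ ∂_θ f(z_l, θ_l). -/
noncomputable section

/-- Jacobian of `f` with respect to its first (state) argument. -/
def jacZ {d n : ℕ}
    (f : EuclideanSpace ℝ (Fin d) × EuclideanSpace ℝ (Fin n) → EuclideanSpace ℝ (Fin d))
    (z : EuclideanSpace ℝ (Fin d)) (w : EuclideanSpace ℝ (Fin n)) :
    EuclideanSpace ℝ (Fin d) →L[ℝ] EuclideanSpace ℝ (Fin d) :=
  fderiv ℝ (fun v => f (v, w)) z

/-- Jacobian of `f` with respect to its second (parameter) argument. -/
def jacTh {d n : ℕ}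
    (f : EuclideanSpace ℝ (Fin d) × EuclideanSpace ℝ (Fin n) → EuclideanSpace ℝ (Fin d))
    (z : EuclideanSpace ℝ (Fin d)) (w : EuclideanSpace ℝ (Fin n)) :
    EuclideanSpace ℝ (Fin n) →L[ℝ] EuclideanSpace ℝ (Fin d) :=
  fderiv ℝ (fun v => f (z, v)) w

/-- Pair `(z_l, z_{l+1})` of Leapfrog states. -/
def leapPair {d n : ℕ}
    (f : EuclideanSpace ℝ (Fin d) × EuclideanSpace ℝ (Fin n) → EuclideanSpace ℝ (Fin d))
    (x : EuclideanSpace ℝ (Fin d)) (h : ℝ) (Θ : ℕ → EuclideanSpace ℝ (Fin n)) :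
    ℕ → EuclideanSpace ℝ (Fin d) × EuclideanSpace ℝ (Fin d)
  | 0 => (x, x + h • f (x, Θ 0))
  | l + 1 =>
      ((leapPair f x h Θ l).2,
        (leapPair f x h Θ l).1 + (2 * h) • f ((leapPair f x h Θ l).2, Θ (l + 1)))

/-- The Leapfrog state `z_l`. -/
def leap {d n : ℕ}
    (f : EuclideanSpace ℝ (Fin d) × EuclideanSpace ℝ (Fin n) → EuclideanSpace ℝ (Fin d))
    (x : EuclideanSpace ℝ (Fin d)) (h : ℝ) (Θ : ℕ → EuclideanSpace ℝ (Fin n)) (l : ℕ) :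
    EuclideanSpace ℝ (Fin d) :=
  (leapPair f x h Θ l).1

/-- Scalar coefficients of the block averaging matrix `T`. -/
def Tcoef (i j : ℕ) : ℝ :=
  if i = 0 then (if j = 0 then 1 else if j = 1 then 3 / 4 else if j = 3 then -(1 / 4) else 0)
  else if j = i then 1 / 2
  else if i = 1 ∧ j = 0 then 1 / 2
  else if j + 1 = i then 1 / 4
  else if j = i + 1 then 1 / 4
  else 0


/-!
Differentiating the Leapfrog recursion in the direction `w` of `θ_l` gives tangents
`a_m = (∂z_m/∂θ_l) w` that vanish for `m ≤ l`, start with `a_{l+1} = 2h ∂_θ f(z_l, θ_l) w`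
(`h ∂_θ f(z_0, θ_0) w` when `l = 0`) and then follow the linearised recursion
`a_{m+2} = a_m + 2h ∂_z f(z_{m+1}, θ_{m+1}) a_{m+1}`. The back-propagator obeys the adjoint
recursion, so the cross pairing `⟨p_m, a_{m+1}⟩ + ⟨p_{m+1}, a_m⟩` is conserved (a discrete Lagrange
identity). Extending `p` by `p_L = 0`, it equals `⟨p_{L-1}, a_L⟩ = 2 ∂_{θ_l}E · w` at `m = L - 1`
and `2h ⟨p_l, ∂_θ f(z_l, θ_l) w⟩` at `m = max l 1`; the special formula for `p_0` is what makes
the latter hold for `l = 0` as well.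
-/

section Calculus

variable {E F G X : Type*}
  [NormedAddCommGroup E] [NormedSpace ℝ E] [NormedAddCommGroup F] [NormedSpace ℝ F]
  [NormedAddCommGroup G] [NormedSpace ℝ G] [NormedAddCommGroup X] [NormedSpace ℝ X]

theorem DifferentiableAt.hasFDerivAt_comp_prodMk {f : E × F → G} {u : X → E} {t : X → F}
    {B : X →L[ℝ] E} {C : X →L[ℝ] F} {x₀ : X} (hf : DifferentiableAt ℝ f (u x₀, t x₀))
    (hu : HasFDerivAt u B x₀) (ht : HasFDerivAt t C x₀) :
    HasFDerivAt (fun v => f (u v, t v))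
      ((fderiv ℝ (fun a => f (a, t x₀)) (u x₀)).comp B +
        (fderiv ℝ (fun b => f (u x₀, b)) (t x₀)).comp C) x₀ := by
  have hD := hf.hasFDerivAt
  have hleft : fderiv ℝ (fun a => f (a, t x₀)) (u x₀) =
      (fderiv ℝ f (u x₀, t x₀)).comp (.inl ℝ E F) :=
    (hD.comp (u x₀) (hasFDerivAt_prodMk_left _ _)).fderiv
  have hright : fderiv ℝ (fun b => f (u x₀, b)) (t x₀) =
      (fderiv ℝ f (u x₀, t x₀)).comp (.inr ℝ E F) :=
    (hD.comp (t x₀) (hasFDerivAt_prodMk_right _ _)).fderiv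
  rw [hleft, hright]
  refine (hD.comp x₀ (hu.prodMk ht)).congr_fderiv ?_
  ext v
  simp [← map_add]

theorem hasFDerivAt_update_apply {ι : Type*} [DecidableEq ι] (Θ : ι → F) (l k : ι) :
    HasFDerivAt (fun v => Function.update Θ l v k)
      (if l = k then ContinuousLinearMap.id ℝ F else 0) (Θ l) := by
  by_cases hlk : l = k
  · subst hlk
    simp only [Function.update_self, if_true]
    exact hasFDerivAt_id (Θ l)
  · simpa [hlk, Function.update_of_ne (Ne.symm hlk)] using hasFDerivAt_const (Θ k) (Θ l)

end Calculus

section Gradient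

variable {E F : Type*} [NormedAddCommGroup E] [InnerProductSpace ℝ E] [CompleteSpace E]
  [NormedAddCommGroup F] [InnerProductSpace ℝ F] [CompleteSpace F]

theorem HasGradientAt.comp_hasFDerivAt {φ : F → ℝ} {z : E → F} {G : F} {A : E →L[ℝ] F} {x : E}
    (hφ : HasGradientAt φ G (z x)) (hz : HasFDerivAt z A x) :
    HasGradientAt (fun v => φ (z v)) (ContinuousLinearMap.adjoint A G) x := by
  rw [hasGradientAt_iff_hasFDerivAt] at hφ ⊢
  refine (hφ.comp x hz).congr_fderiv ?_
  ext v
  simp [ContinuousLinearMap.adjoint_inner_left]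

theorem HasGradientAt.half_sq_sub {g : F → ℝ} {G u : F} (hg : HasGradientAt g G u) (y : ℝ) :
    HasGradientAt (fun u => (1 / 2 : ℝ) * (g u - y) ^ 2) ((g u - y) • G) u := by
  rw [hasGradientAt_iff_hasFDerivAt] at hg ⊢
  refine (((hg.sub_const y).pow 2).const_mul (1 / 2 : ℝ)).congr_fderiv ?_
  ext v
  simp only [InnerProductSpace.toDual_apply_apply, smul_apply, smul_eq_mul,
    map_smul, nsmul_eq_mul, Nat.cast_ofNat]
  ring

end Gradient

section Pairing

variable {E : Type*} [NormedAddCommGroup E] [InnerProductSpace ℝ E] [CompleteSpace E]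

def crossPairing (a p : ℕ → E) (m : ℕ) : ℝ :=
  inner ℝ (p m) (a (m + 1)) + inner ℝ (p (m + 1)) (a m)

theorem crossPairing_succ {a p : ℕ → E} {J : E →L[ℝ] E} {c : ℝ} {m : ℕ}
    (ha : a (m + 2) = a m + c • J (a (m + 1)))
    (hp : p m = p (m + 2) + c • ContinuousLinearMap.adjoint J (p (m + 1))) :
    crossPairing a p (m + 1) = crossPairing a p m := by
  simp only [crossPairing, ha, hp, inner_add_left, inner_add_right, real_inner_smul_left,
    real_inner_smul_right, ContinuousLinearMap.adjoint_inner_left]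
  ring

theorem crossPairing_eq_of_le {a p : ℕ → E} {J : ℕ → E →L[ℝ] E} {c : ℝ} {i j : ℕ} (hij : i ≤ j)
    (ha : ∀ m, i ≤ m → m < j → a (m + 2) = a m + c • J (m + 1) (a (m + 1)))
    (hp : ∀ m, i ≤ m → m < j →
      p m = p (m + 2) + c • ContinuousLinearMap.adjoint (J (m + 1)) (p (m + 1))) :
    crossPairing a p j = crossPairing a p i := by
  induction j, hij using Nat.le_induction with
  | base => rfl
  | succ j hij ih =>
    rw [crossPairing_succ (ha j hij j.lt_succ_self) (hp j hij j.lt_succ_self)]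
    exact ih (fun m hm hmj => ha m hm (by omega)) (fun m hm hmj => hp m hm (by omega))

end Pairing

section Leapfrog

variable {d n : ℕ}
  {f : EuclideanSpace ℝ (Fin d) × EuclideanSpace ℝ (Fin n) → EuclideanSpace ℝ (Fin d)}
  {x : EuclideanSpace ℝ (Fin d)} {h : ℝ} {Θ : ℕ → EuclideanSpace ℝ (Fin n)} {l : ℕ}

variable (f x h Θ l) in
def leapTangent :
    ℕ → (EuclideanSpace ℝ (Fin n) →L[ℝ] EuclideanSpace ℝ (Fin d))
  | 0 => 0
  | 1 => if l = 0 then h • jacTh f x (Θ 0) else 0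
  | m + 2 => leapTangent m + (2 * h) •
      ((jacZ f (leap f x h Θ (m + 1)) (Θ (m + 1))).comp (leapTangent (m + 1)) +
        if l = m + 1 then jacTh f (leap f x h Θ (m + 1)) (Θ (m + 1)) else 0)

theorem hasFDerivAt_leap_step (hf : Differentiable ℝ f) (c : ℝ) (k : ℕ)
    {u z : EuclideanSpace ℝ (Fin n) → EuclideanSpace ℝ (Fin d)}
    {U Z : EuclideanSpace ℝ (Fin n) →L[ℝ] EuclideanSpace ℝ (Fin d)}
    (hu : HasFDerivAt u U (Θ l)) (hz : HasFDerivAt z Z (Θ l)) :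
    HasFDerivAt (fun v => u v + c • f (z v, Function.update Θ l v k))
      (U + c • ((jacZ f (z (Θ l)) (Θ k)).comp Z +
        if l = k then jacTh f (z (Θ l)) (Θ k) else 0)) (Θ l) := by
  have hθ := hasFDerivAt_update_apply Θ l k
  have hfz := (hf _).hasFDerivAt_comp_prodMk hz hθ
  simp only [Function.update_eq_self] at hfz
  refine hu.add ((hfz.const_smul c).congr_fderiv ?_)
  split_ifs <;> simp [jacZ, jacTh]

theorem hasFDerivAt_leap_update (hf : Differentiable ℝ f) (m : ℕ) :
    HasFDerivAt (fun v => leap f x h (Function.update Θ l v) m)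
      (leapTangent f x h Θ l m) (Θ l) := by
  induction m using Nat.twoStepInduction with
  | zero => exact hasFDerivAt_const x (Θ l)
  | one =>
    refine (hasFDerivAt_leap_step hf h 0 (hasFDerivAt_const x (Θ l))
      (hasFDerivAt_const x (Θ l))).congr_fderiv ?_
    ext
    split_ifs <;> simp [leapTangent, *]
  | more m hm hm1 =>
    have hstep := hasFDerivAt_leap_step hf (2 * h) (m + 1) hm hm1
    rwa [Function.update_eq_self] at hstep

theorem leapTangent_add_two_of_ne {m : ℕ} (hlm : l ≠ m + 1) :
    leapTangent f x h Θ l (m + 2) = leapTangent f x h Θ l m + (2 * h) •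
      (jacZ f (leap f x h Θ (m + 1)) (Θ (m + 1))).comp (leapTangent f x h Θ l (m + 1)) := by
  simp [leapTangent, hlm]

theorem leapTangent_eq_zero_of_le {m : ℕ} (hml : m ≤ l) : leapTangent f x h Θ l m = 0 := by
  induction m using Nat.twoStepInduction with
  | zero => rfl
  | one => simp [leapTangent, show l ≠ 0 by omega]
  | more m hm hm1 =>
    rw [leapTangent_add_two_of_ne (by omega), hm (by omega), hm1 (by omega)]
    ext
    simp

theorem leapTangent_succ_self (hl : l ≠ 0) :
    leapTangent f x h Θ l (l + 1) = (2 * h) • jacTh f (leap f x h Θ l) (Θ l) := by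
  obtain ⟨k, rfl⟩ := Nat.exists_eq_succ_of_ne_zero hl
  simp [leapTangent, leapTangent_eq_zero_of_le]

theorem crossPairing_leapTangent_start {p : ℕ → EuclideanSpace ℝ (Fin d)}
    (hp0 : p 0 = (1 / 2 : ℝ) • p 2 + h • (ContinuousLinearMap.adjoint
      (jacZ f (leap f x h Θ 1) (Θ 1))) (p 1)) (w : EuclideanSpace ℝ (Fin n)) :
    crossPairing (fun m => leapTangent f x h Θ l m w) p (max l 1) =
      2 * h * inner ℝ (p l) (jacTh f (leap f x h Θ l) (Θ l) w) := by
  rcases eq_or_ne l 0 with rfl | hl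
  · have hz0 : leap f x h Θ 0 = x := rfl
    simp only [crossPairing, hp0, zero_le, sup_of_le_right, leapTangent, hz0, if_true,
      zero_ne_one, if_false, zero_add, add_zero, ContinuousLinearMap.comp_smulₛₗ, RingHom.id_apply,
      smul_apply, ContinuousLinearMap.comp_apply, inner_add_left,
      real_inner_smul_left, real_inner_smul_right, ContinuousLinearMap.adjoint_inner_left]
    ring
  · simp [crossPairing, Nat.one_le_iff_ne_zero.mpr hl, leapTangent_succ_self hl,
      leapTangent_eq_zero_of_le le_rfl, real_inner_smul_right]

theorem inner_backprop_leapTangent {L : ℕ} (hL : 3 ≤ L) (hl : l < L)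
    {p : ℕ → EuclideanSpace ℝ (Fin d)}
    (hpL2 : p (L - 2) =
      (2 * h) • (ContinuousLinearMap.adjoint
        (jacZ f (leap f x h Θ (L - 1)) (Θ (L - 1)))) (p (L - 1)))
    (hpl : ∀ l, 1 ≤ l → l + 3 ≤ L → p l =
      p (l + 2) + (2 * h) • (ContinuousLinearMap.adjoint
        (jacZ f (leap f x h Θ (l + 1)) (Θ (l + 1)))) (p (l + 1)))
    (hp0 : p 0 = (1 / 2 : ℝ) • p 2 + h • (ContinuousLinearMap.adjoint
        (jacZ f (leap f x h Θ 1) (Θ 1))) (p 1))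
    (w : EuclideanSpace ℝ (Fin n)) :
    inner ℝ (p (L - 1)) (leapTangent f x h Θ l L w) =
      2 * h * inner ℝ (p l) (jacTh f (leap f x h Θ l) (Θ l) w) := by
  -- with `q L = 0`, the terminal condition `hpL2` becomes one more step of the adjoint recursion
  set q := Function.update p L 0
  have hqL : q L = 0 := Function.update_self _ _ _
  have hq_of_lt {m : ℕ} (hm : m < L) : q m = p m := Function.update_of_ne hm.ne _ _
  have hq : ∀ m, 1 ≤ m → m < L - 1 → q m = q (m + 2) + (2 * h) • (ContinuousLinearMap.adjoint
      (jacZ f (leap f x h Θ (m + 1)) (Θ (m + 1)))) (q (m + 1)) := by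
    intro m hm1 hmL
    rcases (show m + 3 ≤ L ∨ m + 2 = L by omega) with hm | hm
    · rw [hq_of_lt (m := m) (by omega), hq_of_lt (m := m + 1) (by omega),
        hq_of_lt (m := m + 2) (by omega)]
      exact hpl m hm1 hm
    · obtain rfl : m = L - 2 := by omega
      rw [show L - 2 + 1 = L - 1 by omega, hm, hq_of_lt (m := L - 2) (by omega),
        hq_of_lt (m := L - 1) (by omega), hqL, zero_add]
      exact hpL2
  have hinvariant := crossPairing_eq_of_le (a := fun m => leapTangent f x h Θ l m w) (p := q)
    (J := fun m => jacZ f (leap f x h Θ m) (Θ m)) (c := 2 * h) (i := max l 1) (j := L - 1)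
    (by omega) (fun m hm _ => by simp [leapTangent_add_two_of_ne (show l ≠ m + 1 by omega)])
    (fun m hm hmL => hq m (by omega) hmL)
  have hstart := crossPairing_leapTangent_start (l := l) (w := w)
    (by rwa [hq_of_lt (m := 0) (by omega), hq_of_lt (m := 1) (by omega),
      hq_of_lt (m := 2) (by omega)] : q 0 = _)
  rw [hstart, hq_of_lt hl] at hinvariant
  simpa [crossPairing, show L - 1 + 1 = L by omega, hqL, hq_of_lt (m := L - 1) (by omega)]
    using hinvariant

end Leapfrog

/-- Auto-differentiation of the Leapfrog-network loss: for every
layer `l`, `L ∂_{θ_l} E = p_lᵀ ∂_θ f(z_l, θ_l)`, where `p` is the back-propagator. -/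
theorem leapfrog_autodiff_gradient {d n : ℕ} (L : ℕ) (hL : 4 ≤ L)
    (f : EuclideanSpace ℝ (Fin d) × EuclideanSpace ℝ (Fin n) → EuclideanSpace ℝ (Fin d))
    (g : EuclideanSpace ℝ (Fin d) → ℝ)
    (hf : ContDiff ℝ 1 f) (hg : ContDiff ℝ 1 g)
    (x : EuclideanSpace ℝ (Fin d)) (y : ℝ)
    (Θ : ℕ → EuclideanSpace ℝ (Fin n))
    (h : ℝ) (hh : h = 1 / (L : ℝ))
    (p : ℕ → EuclideanSpace ℝ (Fin d))
    (hpL1 : p (L - 1) =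
      (2 * (g (leap f x h Θ L) - y)) • gradient g (leap f x h Θ L))
    (hpL2 : p (L - 2) =
      (2 * h) • (ContinuousLinearMap.adjoint
        (jacZ f (leap f x h Θ (L - 1)) (Θ (L - 1)))) (p (L - 1)))
    (hpl : ∀ l, 1 ≤ l → l + 3 ≤ L → p l =
      p (l + 2) + (2 * h) • (ContinuousLinearMap.adjoint
        (jacZ f (leap f x h Θ (l + 1)) (Θ (l + 1)))) (p (l + 1)))
    (hp0 : p 0 = (1 / 2 : ℝ) • p 2 + h • (ContinuousLinearMap.adjoint
        (jacZ f (leap f x h Θ 1) (Θ 1))) (p 1)) :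
    ∀ l < L,
      (L : ℝ) • gradient
          (fun v => (1 / 2 : ℝ) * (g (leap f x h (Function.update Θ l v) L) - y) ^ 2) (Θ l)
        = (ContinuousLinearMap.adjoint (jacTh f (leap f x h Θ l) (Θ l))) (p l) := by
  intro l hl
  have hz := hasFDerivAt_leap_update (x := x) (h := h) (Θ := Θ) (l := l)
    (hf.differentiable one_ne_zero) L
  have hE := ((hg.differentiable one_ne_zero _).hasGradientAt.half_sq_sub y).comp_hasFDerivAt hz
  simp only [Function.update_eq_self] at hE
  have hresidual : (g (leap f x h Θ L) - y) • gradient g (leap f x h Θ L) =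
      (1 / 2 : ℝ) • p (L - 1) := by
    rw [hpL1, smul_smul]
    ring_nf
  have hLh : (L : ℝ) * h = 1 := by
    rw [hh]
    field_simp
  rw [hE.gradient, hresidual]
  refine ext_inner_right ℝ fun w => ?_
  rw [real_inner_smul_left, ContinuousLinearMap.adjoint_inner_left,
    ContinuousLinearMap.adjoint_inner_left, real_inner_smul_left,
    inner_backprop_leapTangent (by omega) hl hpL2 hpl hp0]
  linear_combination inner ℝ (p l) (jacTh f (leap f x h Θ l) (Θ l) w) * hLh
end
end

section
/- Let f : ℝ^d × ℝ^n → ℝ^d be continuously differentiable, g : ℝ^d → ℝ continuously differentiable, x ∈ ℝ^d, y ∈ ℝ, and θ, δθ : [0,1] → ℝ^n continuous. Suppose z : ℝ × [0,1] → ℝ^d is continuously differentiable, satisfies ∂_t z(ε,t) = f(z(ε,t), θ(t) + ε δθ(t)) and z(ε,0) = x for all ε in a neighborhood of 0 and t ∈ [0,1], and that ∂_ε z exists and is continuous. Let p : [0,1] → ℝ^d solve the adjoint equation −p'(t)ᵀ = p(t)ᵀ ∂_z f(z(0,t), θ(t)) with final condition p(1)ᵀ = (g(z(0,1)) − y)∇g(z(0,1))ᵀ.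 Then the derivative at ε = 0 of the loss Ẽ(ε) = (1/2)|g(z(ε,1)) − y|² equals ∫₀¹ p(t)ᵀ ∂_θ f(z(0,t), θ(t)) δθ(t) dt. -/
/-!
Write `v = ∂_ε z(0, ·)`. Differentiating the integral form of the perturbed ODE under the integral
sign gives the variational equation `v' = ∂_z f · v + ∂_θ f · δθ` with `v(0) = 0`. Against a
solution `p` of the adjoint equation the `∂_z f`-terms cancel, so
`⟪p(1), v(1)⟫ = ∫₀¹ ⟪p, ∂_θ f · δθ⟫`; by the final condition on `p`, the left side is
`(g(z(0,1)) - y) · Dg(z(0,1)) v(1)`, which is the derivative of the loss by the chain rule.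
-/

noncomputable section

open Set Filter Topology MeasureTheory ContinuousLinearMap
open scoped Interval InnerProductSpace

section ParametricIntegral

variable {E : Type*} [NormedAddCommGroup E] [NormedSpace ℝ E]

/-- Compactness of `closedBall ε₀ r ×ˢ Icc a b` supplies the dominating constant. -/
theorem hasDerivAt_intervalIntegral_of_continuousOn_deriv {F F' : ℝ → ℝ → E} {a b ε₀ r : ℝ}
    (hab : a ≤ b) (hr : 0 < r)
    (hF : ∀ ε ∈ Metric.ball ε₀ r, ContinuousOn (F ε) (Icc a b))
    (hF' : ContinuousOn (Function.uncurry F') (Metric.closedBall ε₀ r ×ˢ Icc a b))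
    (hdiff : ∀ ε ∈ Metric.ball ε₀ r, ∀ s ∈ Icc a b, HasDerivAt (F · s) (F' ε s) ε) :
    HasDerivAt (fun ε => ∫ s in a..b, F ε s) (∫ s in a..b, F' ε₀ s) ε₀ := by
  obtain ⟨C, hC⟩ :=
    ((isCompact_closedBall ε₀ r).prod isCompact_Icc).exists_bound_of_continuousOn hF'
  have hsub : Ι a b ⊆ Icc a b := by rw [uIoc_of_le hab]; exact Ioc_subset_Icc_self
  have hε₀ : ε₀ ∈ Metric.ball ε₀ r := Metric.mem_ball_self hr
  have hF'₀ : ContinuousOn (F' ε₀) (Icc a b) :=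
    hF'.comp (continuousOn_const.prodMk continuousOn_id)
      fun s hs => ⟨Metric.ball_subset_closedBall hε₀, hs⟩
  refine (intervalIntegral.hasDerivAt_integral_of_dominated_loc_of_deriv_le
    (bound := fun _ => C) (Metric.ball_mem_nhds ε₀ hr)
    (eventually_of_mem (Metric.ball_mem_nhds ε₀ hr) fun ε hε =>
      ((hF ε hε).mono hsub).aestronglyMeasurable measurableSet_uIoc)
    ((hF ε₀ hε₀).intervalIntegrable_of_Icc hab)
    ((hF'₀.mono hsub).aestronglyMeasurable measurableSet_uIoc)
    (ae_of_all _ fun s hs ε hε => hC (ε, s) ⟨Metric.ball_subset_closedBall hε, hsub hs⟩)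
    intervalIntegrable_const
    (ae_of_all _ fun s hs ε hε => hdiff ε hε s (hsub hs))).2

end ParametricIntegral

section PartialDerivative

variable {E : Type*} [NormedAddCommGroup E] [NormedSpace ℝ E]

/-- `∂_ε z (ε, t)`. -/
def partialFst (z : ℝ → ℝ → E) (ε t : ℝ) : E :=
  fderiv ℝ (Function.uncurry z) (ε, t) (1, 0)

theorem hasDerivAt_partialFst {z : ℝ → ℝ → E} (hz : Differentiable ℝ (Function.uncurry z))
    (ε t : ℝ) : HasDerivAt (fun e => z e t) (partialFst z ε t) ε :=
  (hz (ε, t)).hasFDerivAt.comp_hasDerivAt (f := fun e : ℝ => (e, t)) ε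
    ((hasDerivAt_id ε).prodMk (hasDerivAt_const ε t))

theorem continuous_partialFst {z : ℝ → ℝ → E} (hz : ContDiff ℝ 1 (Function.uncurry z)) :
    Continuous (Function.uncurry (partialFst z)) :=
  (hz.continuous_fderiv one_ne_zero).clm_apply continuous_const

end PartialDerivative

section Adjoint

variable {H : Type*} [NormedAddCommGroup H] [InnerProductSpace ℝ H] [CompleteSpace H]

/-- Lagrange identity: the `A`-terms cancel in `d/dt ⟪p, v⟫`, leaving `⟪p, c⟫`. -/
theorem inner_sub_inner_eq_integral_of_adjoint {A : ℝ → H →L[ℝ] H} {p v c : ℝ → H} {a b : ℝ}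
    (hab : a ≤ b) (hp : ∀ t ∈ Icc a b, HasDerivAt p (-(adjoint (A t)) (p t)) t)
    (hv : ∀ t ∈ Ioo a b, HasDerivAt v (A t (v t) + c t) t) (hvc : ContinuousOn v (Icc a b))
    (hc : IntervalIntegrable (fun t => ⟪p t, c t⟫_ℝ) volume a b) :
    ⟪p b, v b⟫_ℝ - ⟪p a, v a⟫_ℝ = ∫ t in a..b, ⟪p t, c t⟫_ℝ := by
  have hpc : ContinuousOn p (Icc a b) := fun t ht => (hp t ht).continuousAt.continuousWithinAt
  refine (intervalIntegral.integral_eq_sub_of_hasDerivAt_of_le hab (hpc.inner hvc)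
    (fun t ht => ?_) hc).symm
  have h := (hp t (Ioo_subset_Icc_self ht)).inner ℝ (hv t ht)
  rwa [inner_add_right, inner_neg_left, adjoint_inner_left, add_neg_cancel_comm] at h

end Adjoint

section Jacobian

variable {d n : ℕ}
  {f : EuclideanSpace ℝ (Fin d) × EuclideanSpace ℝ (Fin n) → EuclideanSpace ℝ (Fin d)}

theorem jacZ_eq_fderiv_comp_inl {a : EuclideanSpace ℝ (Fin d)} {b : EuclideanSpace ℝ (Fin n)}
    (hf : DifferentiableAt ℝ f (a, b)) : jacZ f a b = fderiv ℝ f (a, b) ∘L inl ℝ _ _ :=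
  (hf.hasFDerivAt.comp a (hasFDerivAt_prodMk_left a b)).fderiv

theorem jacTh_eq_fderiv_comp_inr {a : EuclideanSpace ℝ (Fin d)} {b : EuclideanSpace ℝ (Fin n)}
    (hf : DifferentiableAt ℝ f (a, b)) : jacTh f a b = fderiv ℝ f (a, b) ∘L inr ℝ _ _ :=
  (hf.hasFDerivAt.comp b (hasFDerivAt_prodMk_right a b)).fderiv

theorem fderiv_apply_eq_jacZ_add_jacTh {a u : EuclideanSpace ℝ (Fin d)}
    {b w : EuclideanSpace ℝ (Fin n)} (hf : DifferentiableAt ℝ f (a, b)) :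
    fderiv ℝ f (a, b) (u, w) = jacZ f a b u + jacTh f a b w := by
  rw [jacZ_eq_fderiv_comp_inl hf, jacTh_eq_fderiv_comp_inr hf]
  exact (comp_inl_add_comp_inr _ (u, w)).symm

variable {s : Set ℝ} {ζ : ℝ → EuclideanSpace ℝ (Fin d)} {θ : ℝ → EuclideanSpace ℝ (Fin n)}

theorem ContinuousOn.jacZ (hf : ContDiff ℝ 1 f) (hζ : ContinuousOn ζ s) (hθ : ContinuousOn θ s) :
    ContinuousOn (fun t => jacZ f (ζ t) (θ t)) s := by
  simp_rw [jacZ_eq_fderiv_comp_inl (hf.differentiable one_ne_zero _)]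
  exact ((hf.continuous_fderiv one_ne_zero).comp_continuousOn (hζ.prodMk hθ)).clm_comp
    continuousOn_const

theorem ContinuousOn.jacTh (hf : ContDiff ℝ 1 f) (hζ : ContinuousOn ζ s)
    (hθ : ContinuousOn θ s) : ContinuousOn (fun t => jacTh f (ζ t) (θ t)) s := by
  simp_rw [jacTh_eq_fderiv_comp_inr (hf.differentiable one_ne_zero _)]
  exact ((hf.continuous_fderiv one_ne_zero).comp_continuousOn (hζ.prodMk hθ)).clm_comp
    continuousOn_const

end Jacobian

section Sensitivity

variable {d n : ℕ}
  {f : EuclideanSpace ℝ (Fin d) × EuclideanSpace ℝ (Fin n) → EuclideanSpace ℝ (Fin d)}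
  {θ δθ : ℝ → EuclideanSpace ℝ (Fin n)} {z : ℝ → ℝ → EuclideanSpace ℝ (Fin d)} {a b : ℝ}

/-- Since `z` is only `C¹`, the variational equation cannot be obtained by exchanging `∂_t` and
`∂_ε`; it comes from differentiating the integral form of the ODE under the integral sign. -/
theorem partialFst_sub_eq_integral (hf : ContDiff ℝ 1 f) (hθ : ContinuousOn θ (Icc a b))
    (hδθ : ContinuousOn δθ (Icc a b)) (hz : ContDiff ℝ 1 (Function.uncurry z))
    (hode : ∀ᶠ ε in 𝓝 (0 : ℝ), ∀ t ∈ Icc a b,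
      HasDerivAt (fun s => z ε s) (f (z ε t, θ t + ε • δθ t)) t)
    {t : ℝ} (ht : t ∈ Icc a b) :
    partialFst z 0 t - partialFst z 0 a = ∫ s in a..t,
      (jacZ f (z 0 s) (θ s) (partialFst z 0 s) + jacTh f (z 0 s) (θ s) (δθ s)) := by
  have hsub : Icc a t ⊆ Icc a b := Icc_subset_Icc_right ht.2
  have hzd := hz.differentiable one_ne_zero
  set F : ℝ → ℝ → EuclideanSpace ℝ (Fin d) := fun ε s => f (z ε s, θ s + ε • δθ s)
  set F' : ℝ → ℝ → EuclideanSpace ℝ (Fin d) := fun ε s =>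
    fderiv ℝ f (z ε s, θ s + ε • δθ s) (partialFst z ε s, δθ s)
  have hFc (ε : ℝ) : ContinuousOn (F ε) (Icc a t) :=
    hf.continuous.comp_continuousOn
      ((hz.continuous.uncurry_left ε).continuousOn.prodMk
        ((hθ.add (hδθ.const_smul ε)).mono hsub))
  have hF'c : ContinuousOn (Function.uncurry F') (Metric.closedBall 0 1 ×ˢ Icc a t) := by
    have hsnd : MapsTo Prod.snd (Metric.closedBall (0 : ℝ) 1 ×ˢ Icc a t) (Icc a b) :=
      fun q hq => hsub hq.2
    have hδθ' := hδθ.comp continuousOn_snd hsnd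
    exact ((hf.continuous_fderiv one_ne_zero).comp_continuousOn
      (hz.continuous.continuousOn.prodMk
        ((hθ.comp continuousOn_snd hsnd).add (continuousOn_fst.smul hδθ')))).clm_apply
      ((continuous_partialFst hz).continuousOn.prodMk hδθ')
  have hFd (ε s : ℝ) : HasDerivAt (F · s) (F' ε s) ε := by
    have hpert : HasDerivAt (fun e : ℝ => θ s + e • δθ s) (δθ s) ε := by
      simpa using ((hasDerivAt_id ε).smul_const (δθ s)).const_add (θ s)
    exact (hf.differentiable one_ne_zero _).hasFDerivAt.comp_hasDerivAt ε
      ((hasDerivAt_partialFst hzd ε s).prodMk hpert)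
  have hrep : (fun ε => z ε t - z ε a) =ᶠ[𝓝 0] fun ε => ∫ s in a..t, F ε s := by
    filter_upwards [hode] with ε hε
    refine (intervalIntegral.integral_eq_sub_of_hasDerivAt (fun s hs => hε s (hsub ?_))
      ((hFc ε).intervalIntegrable_of_Icc ht.1)).symm
    rwa [uIcc_of_le ht.1] at hs
  have hderiv := ((hasDerivAt_partialFst hzd 0 t).sub (hasDerivAt_partialFst hzd 0 a)).unique
    ((hasDerivAt_intervalIntegral_of_continuousOn_deriv ht.1 one_pos (fun ε _ => hFc ε) hF'c
      fun ε _ s _ => hFd ε s).congr_of_eventuallyEq hrep)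
  rw [hderiv]
  refine intervalIntegral.integral_congr fun s _ => ?_
  simp only [F', zero_smul, add_zero]
  exact fderiv_apply_eq_jacZ_add_jacTh (hf.differentiable one_ne_zero _)

theorem hasDerivAt_partialFst_of_ode (hf : ContDiff ℝ 1 f) (hθ : ContinuousOn θ (Icc a b))
    (hδθ : ContinuousOn δθ (Icc a b)) (hz : ContDiff ℝ 1 (Function.uncurry z))
    (hode : ∀ᶠ ε in 𝓝 (0 : ℝ), ∀ t ∈ Icc a b,
      HasDerivAt (fun s => z ε s) (f (z ε t, θ t + ε • δθ t)) t)
    {t : ℝ} (ht : t ∈ Ioo a b) :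
    HasDerivAt (partialFst z 0)
      (jacZ f (z 0 t) (θ t) (partialFst z 0 t) + jacTh f (z 0 t) (θ t) (δθ t)) t := by
  have hz₀ : ContinuousOn (z 0) (Icc a b) :=
    (hz.continuous.uncurry_left 0).continuousOn
  have hG : ContinuousOn (fun s =>
      jacZ f (z 0 s) (θ s) (partialFst z 0 s) + jacTh f (z 0 s) (θ s) (δθ s)) (Icc a b) :=
    ((hz₀.jacZ hf hθ).clm_apply ((continuous_partialFst hz).uncurry_left 0).continuousOn).add
      ((hz₀.jacTh hf hθ).clm_apply hδθ)
  have hIcc : Icc a b ∈ 𝓝 t := Icc_mem_nhds ht.1 ht.2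
  have hprim := intervalIntegral.integral_hasDerivAt_right
    ((hG.mono (Icc_subset_Icc_right ht.2.le)).intervalIntegrable_of_Icc ht.1.le)
    ((hG.mono Ioo_subset_Icc_self).stronglyMeasurableAtFilter isOpen_Ioo t ht)
    (hG.continuousAt hIcc)
  refine (hprim.const_add (partialFst z 0 a)).congr_of_eventuallyEq ?_
  filter_upwards [hIcc] with u hu
  rw [← partialFst_sub_eq_integral hf hθ hδθ hz hode hu, add_sub_cancel]

end Sensitivity

open Set in
/-- Adjoint-state formula: the derivative at `ε = 0` of the perturbed
continuous loss `Ẽ(ε) = ½|g(z(ε,1)) − y|²` equals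
`∫₀¹ p(t)ᵀ ∂_θ f(z(0,t), θ(t)) δθ(t) dt`. -/
theorem continuous_adjoint_functional_derivative {d n : ℕ}
    (f : EuclideanSpace ℝ (Fin d) × EuclideanSpace ℝ (Fin n) → EuclideanSpace ℝ (Fin d))
    (g : EuclideanSpace ℝ (Fin d) → ℝ)
    (x : EuclideanSpace ℝ (Fin d)) (y : ℝ)
    (θ δθ : ℝ → EuclideanSpace ℝ (Fin n))
    (z : ℝ → ℝ → EuclideanSpace ℝ (Fin d))
    (p : ℝ → EuclideanSpace ℝ (Fin d))
    (hf : ContDiff ℝ 1 f) (hg : ContDiff ℝ 1 g)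
    (hθ : ContinuousOn θ (Icc 0 1)) (hδθ : ContinuousOn δθ (Icc 0 1))
    (hz : ContDiff ℝ 1 (Function.uncurry z))
    (hode : ∀ᶠ ε in nhds (0 : ℝ), z ε 0 = x ∧
      ∀ t ∈ Icc (0 : ℝ) 1, HasDerivAt (fun s => z ε s) (f (z ε t, θ t + ε • δθ t)) t)
    (hp : ∀ t ∈ Icc (0 : ℝ) 1, HasDerivAt p
      (-(ContinuousLinearMap.adjoint (jacZ f (z 0 t) (θ t))) (p t)) t)
    (hp1 : p 1 = (g (z 0 1) - y) • gradient g (z 0 1)) :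
    HasDerivAt (fun ε => (1 / 2 : ℝ) * (g (z ε 1) - y) ^ 2)
      (∫ t in (0 : ℝ)..1,
        (inner ℝ ((ContinuousLinearMap.adjoint (jacTh f (z 0 t) (θ t))) (p t)) (δθ t) : ℝ))
      0 := by
  have hzd := hz.differentiable one_ne_zero
  have hv₀ : partialFst z 0 0 = 0 :=
    (hasDerivAt_partialFst hzd 0 0).unique
      ((hasDerivAt_const (0 : ℝ) x).congr_of_eventuallyEq (hode.mono fun _ h => h.1))
  have hpc : ContinuousOn p (Icc 0 1) := fun t ht => (hp t ht).continuousAt.continuousWithinAt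
  have hz₀ : ContinuousOn (z 0) (Icc 0 1) :=
    (hz.continuous.uncurry_left 0).continuousOn
  have hpairing := inner_sub_inner_eq_integral_of_adjoint zero_le_one hp
    (fun t ht => hasDerivAt_partialFst_of_ode hf hθ hδθ hz (hode.mono fun _ h => h.2) ht)
    ((continuous_partialFst hz).uncurry_left 0).continuousOn
    ((hpc.inner ((hz₀.jacTh hf hθ).clm_apply hδθ)).intervalIntegrable_of_Icc zero_le_one)
  rw [hv₀, inner_zero_right, sub_zero, hp1, real_inner_smul_left, inner_gradient_left] at hpairing
  simp only [adjoint_inner_left, ← hpairing]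
  have hg₁ : HasDerivAt (fun ε => g (z ε 1)) (fderiv ℝ g (z 0 1) (partialFst z 0 1)) 0 :=
    (hg.differentiable one_ne_zero _).hasFDerivAt.comp_hasDerivAt 0 (hasDerivAt_partialFst hzd 0 1)
  exact (((hg₁.sub_const y).pow 2).const_mul (1 / 2 : ℝ)).congr_deriv (by push_cast; ring)
end
end

section
/- Let f : ℝ^d × ℝ^n → ℝ^d be twice continuously differentiable with bounded first and second derivatives, and let θ : [0,1] → ℝ^n be twice continuously differentiable with bounded second derivative. Fix x ∈ ℝ^d. Let z : [0,1] → ℝ^d solve z'(t) = f(z(t), θ(t)) with z(0) = x. For each integer L ≥ 2, set h = 1/L, θ_l = θ(lh), and define the Leapfrog iterates z_0 = x, z_1 = z_0 + h f(z_0, θ_0), z_{l+2} = z_l + 2h f(z_{l+1}, θ_{l+1}) for l = 0,…,L−2. Then there exists a constant C, independent of L, such that for all L ≥ 2 and all l = 0,1,…,L, |z(lh) − z_l| ≤ C h². -/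
/-!
The scheme is consistent of order two and stable. Since `f` and `θ` are `C²`, the exact solution
is `C³` on `[0, 1]`, so Taylor expansion about the midpoint makes the central step
`z(t + h) - z(t - h) - 2h z'(t)` of size `O(h³)`, and the Euler start step has defect `O(h²)`.
As `f` is `B`-Lipschitz in the state, the errors `eₗ` satisfy
`eₗ₊₂ ≤ eₗ + 2hB eₗ₊₁ + O(h³)`; a discrete Grönwall inequality for `max eₗ eₗ₊₁` adds up the
`L = 1/h` defects to `O(h²)`, amplified by at most `exp (2B)`.
-/

noncomputable section

open Set

section Taylor

variable {E : Type*} [NormedAddCommGroup E] [NormedSpace ℝ E] {s : Set ℝ}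

theorem Convex.norm_le_of_hasDerivWithinAt_of_norm_le_mul_pow {φ φ' : ℝ → E} (hs : Convex ℝ s)
    {a b C : ℝ} {k : ℕ} (hC : 0 ≤ C) (hφ : ∀ t ∈ s, HasDerivWithinAt φ (φ' t) s t)
    (hφ' : ∀ t ∈ s, ‖φ' t‖ ≤ C * |t - a| ^ k) (hφa : φ a = 0) (ha : a ∈ s) (hb : b ∈ s) :
    ‖φ b‖ ≤ C * |b - a| ^ (k + 1) := by
  have hsub : segment ℝ a b ⊆ s := hs.segment_subset ha hb
  have hbound : ∀ t ∈ segment ℝ a b, ‖φ' t‖ ≤ C * |b - a| ^ k := fun t ht => by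
    refine (hφ' t (hsub ht)).trans ?_
    have : |t - a| ≤ |b - a| := abs_sub_left_of_mem_uIcc (segment_eq_uIcc a b ▸ ht)
    gcongr
  have := (convex_segment a b).norm_image_sub_le_of_norm_hasDerivWithin_le
    (fun t ht => (hφ t (hsub ht)).mono hsub) hbound (left_mem_segment ℝ a b)
    (right_mem_segment ℝ a b)
  rwa [hφa, sub_zero, Real.norm_eq_abs, mul_assoc, ← pow_succ] at this

theorem Convex.norm_taylor_two_sub_le {u u₁ u₂ u₃ : ℝ → E} (hs : Convex ℝ s) {K a b : ℝ}
    (h₁ : ∀ t ∈ s, HasDerivWithinAt u (u₁ t) s t) (h₂ : ∀ t ∈ s, HasDerivWithinAt u₁ (u₂ t) s t)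
    (h₃ : ∀ t ∈ s, HasDerivWithinAt u₂ (u₃ t) s t) (hK : ∀ t ∈ s, ‖u₃ t‖ ≤ K)
    (ha : a ∈ s) (hb : b ∈ s) :
    ‖u b - u a - (b - a) • u₁ a - ((b - a) ^ 2 / 2) • u₂ a‖ ≤ K * |b - a| ^ 3 := by
  have hK0 : 0 ≤ K := (norm_nonneg _).trans (hK a ha)
  have e₂ : ∀ t ∈ s, ‖u₂ t - u₂ a‖ ≤ K * |t - a| ^ 1 := fun t ht =>
    hs.norm_le_of_hasDerivWithinAt_of_norm_le_mul_pow hK0 (fun r hr => (h₃ r hr).sub_const _)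
      (by simpa using hK) (sub_self _) ha ht
  have e₁ : ∀ t ∈ s, ‖u₁ t - u₁ a - (t - a) • u₂ a‖ ≤ K * |t - a| ^ 2 := fun t ht => by
    refine hs.norm_le_of_hasDerivWithinAt_of_norm_le_mul_pow
      (φ := fun r => u₁ r - u₁ a - (r - a) • u₂ a) hK0 (fun r hr => ?_) e₂ (by simp) ha ht
    have := ((h₂ r hr).sub_const (u₁ a)).sub
      (((hasDerivWithinAt_id r s).sub_const a).smul_const (u₂ a))
    convert this using 1
    · ext; simp
    · simp
  refine hs.norm_le_of_hasDerivWithinAt_of_norm_le_mul_pow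
    (φ := fun r => u r - u a - (r - a) • u₁ a - ((r - a) ^ 2 / 2) • u₂ a) hK0 (fun r hr => ?_) e₁
    (by simp) ha hb
  have := (((h₁ r hr).sub_const (u a)).sub
      (((hasDerivWithinAt_id r s).sub_const a).smul_const (u₁ a))).sub
    ((((hasDerivWithinAt_id r s).sub_const a).pow 2).div_const 2 |>.smul_const (u₂ a))
  convert this using 1
  · ext; simp
  · simp only [id, one_smul]
    module

theorem Convex.norm_sub_sub_two_smul_le {u u₁ u₂ u₃ : ℝ → E} (hs : Convex ℝ s) {K t h : ℝ}
    (h₁ : ∀ t ∈ s, HasDerivWithinAt u (u₁ t) s t) (h₂ : ∀ t ∈ s, HasDerivWithinAt u₁ (u₂ t) s t)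
    (h₃ : ∀ t ∈ s, HasDerivWithinAt u₂ (u₃ t) s t) (hK : ∀ t ∈ s, ‖u₃ t‖ ≤ K)
    (ht : t ∈ s) (htp : t + h ∈ s) (htm : t - h ∈ s) :
    ‖u (t + h) - u (t - h) - (2 * h) • u₁ t‖ ≤ 2 * K * |h| ^ 3 := by
  have hp := hs.norm_taylor_two_sub_le h₁ h₂ h₃ hK ht htp
  have hm := hs.norm_taylor_two_sub_le h₁ h₂ h₃ hK ht htm
  rw [add_sub_cancel_left] at hp
  rw [sub_sub_cancel_left, abs_neg] at hm
  calc ‖u (t + h) - u (t - h) - (2 * h) • u₁ t‖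
      = ‖(u (t + h) - u t - h • u₁ t - (h ^ 2 / 2) • u₂ t)
          - (u (t - h) - u t - (-h) • u₁ t - ((-h) ^ 2 / 2) • u₂ t)‖ := by congr 1; module
    _ ≤ K * |h| ^ 3 + K * |h| ^ 3 := norm_sub_le_of_le hp hm
    _ = 2 * K * |h| ^ 3 := by ring

end Taylor

section Flow

variable {E F G : Type*} [NormedAddCommGroup E] [NormedSpace ℝ E] [NormedAddCommGroup F]
  [NormedSpace ℝ F] [NormedAddCommGroup G] [NormedSpace ℝ G]

theorem norm_sub_le_of_norm_fderiv_le_prodMk_left {f : E × F → G} {B : ℝ}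
    (hf : Differentiable ℝ f) (hB : ∀ w, ‖fderiv ℝ f w‖ ≤ B) (a b : E) (c : F) :
    ‖f (a, c) - f (b, c)‖ ≤ B * ‖a - b‖ := by
  have := convex_univ.norm_image_sub_le_of_norm_fderiv_le (fun w _ => hf w) (fun w _ => hB w)
    (mem_univ (b, c)) (mem_univ (a, c))
  rwa [Prod.mk_sub_mk, sub_self, Prod.norm_mk, norm_zero, max_eq_left (norm_nonneg _)] at this

theorem contDiffOn_comp_of_hasDerivWithinAt {f : E × F → E} {θ : ℝ → F} {z : ℝ → E}
    {s : Set ℝ} (hs : UniqueDiffOn ℝ s) (hz : ∀ t ∈ s, HasDerivWithinAt z (f (z t, θ t)) s t) :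
    ∀ {k : ℕ}, ContDiff ℝ k f → ContDiff ℝ k θ → ContDiffOn ℝ k (fun t => f (z t, θ t)) s
  | 0, hf, hθ => by
    have hz_cont : ContinuousOn z s := fun t ht => (hz t ht).continuousWithinAt
    exact contDiffOn_zero.2 <|
      hf.continuous.comp_continuousOn (hz_cont.prodMk hθ.continuous.continuousOn)
  | k + 1, hf, hθ => by
    have ih := contDiffOn_comp_of_hasDerivWithinAt (k := k) hs hz (hf.of_le (by simp))
      (hθ.of_le (by simp))
    have hz_smooth : ContDiffOn ℝ (k + 1) z s := by
      refine (contDiffOn_succ_iff_derivWithin hs).2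
        ⟨fun t ht => (hz t ht).differentiableWithinAt, by simp, ih.congr fun t ht => ?_⟩
      exact (hz t ht).derivWithin (hs t ht)
    exact hf.comp_contDiffOn (hz_smooth.prodMk hθ.contDiffOn)

theorem exists_norm_leapfrog_defect_le {u u₁ : ℝ → E}
    (hu : ∀ t ∈ Icc (0 : ℝ) 1, HasDerivWithinAt u (u₁ t) (Icc 0 1) t)
    (hu₁ : ContDiffOn ℝ 2 u₁ (Icc 0 1)) :
    ∃ K, 0 ≤ K ∧ (∀ h ∈ Icc (0 : ℝ) 1, ‖u h - u 0 - h • u₁ 0‖ ≤ K * h ^ 2) ∧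
      ∀ t h, t - h ∈ Icc (0 : ℝ) 1 → t + h ∈ Icc (0 : ℝ) 1 →
        ‖u (t + h) - u (t - h) - (2 * h) • u₁ t‖ ≤ K * |h| ^ 3 := by
  set s := Icc (0 : ℝ) 1
  have hs : UniqueDiffOn ℝ s := uniqueDiffOn_Icc one_pos
  have h0 : (0 : ℝ) ∈ s := ⟨le_rfl, zero_le_one⟩
  set u₂ := derivWithin u₁ s
  have hu₂ : ContDiffOn ℝ 1 u₂ s := hu₁.derivWithin hs (by norm_num)
  have h₂ : ∀ t ∈ s, HasDerivWithinAt u₁ (u₂ t) s t := fun t ht =>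
    (hu₁.differentiableOn two_ne_zero t ht).hasDerivWithinAt
  have h₃ : ∀ t ∈ s, HasDerivWithinAt u₂ (derivWithin u₂ s t) s t := fun t ht =>
    (hu₂.differentiableOn one_ne_zero t ht).hasDerivWithinAt
  obtain ⟨K₂, hK₂⟩ := isCompact_Icc.exists_bound_of_continuousOn hu₂.continuousOn
  obtain ⟨K₃, hK₃⟩ :=
    isCompact_Icc.exists_bound_of_continuousOn (hu₂.continuousOn_derivWithin hs le_rfl)
  have hK₂0 : 0 ≤ K₂ := (norm_nonneg _).trans (hK₂ 0 h0)
  have hK₃0 : 0 ≤ K₃ := (norm_nonneg _).trans (hK₃ 0 h0)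
  refine ⟨2 * K₃ + K₂, by positivity, fun h hh => ?_, fun t h htm htp => ?_⟩
  · have htaylor := (convex_Icc 0 1).norm_taylor_two_sub_le hu h₂ h₃ hK₃ h0 hh
    rw [sub_zero, abs_of_nonneg hh.1] at htaylor
    have hu₂0 : ‖(h ^ 2 / 2) • u₂ 0‖ ≤ h ^ 2 / 2 * K₂ := by
      rw [norm_smul, Real.norm_of_nonneg (by positivity)]
      exact mul_le_mul_of_nonneg_left (hK₂ 0 h0) (by positivity)
    have hh3 : h ^ 3 ≤ h ^ 2 := pow_le_pow_of_le_one hh.1 hh.2 (by norm_num)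
    calc ‖u h - u 0 - h • u₁ 0‖
        = ‖(u h - u 0 - h • u₁ 0 - (h ^ 2 / 2) • u₂ 0) + (h ^ 2 / 2) • u₂ 0‖ := by
          rw [sub_add_cancel]
      _ ≤ K₃ * h ^ 3 + h ^ 2 / 2 * K₂ := norm_add_le_of_le htaylor hu₂0
      _ ≤ (2 * K₃ + K₂) * h ^ 2 := by nlinarith
  · have ht : t ∈ s := ⟨by linarith [htm.1, htp.1], by linarith [htm.2, htp.2]⟩
    calc ‖u (t + h) - u (t - h) - (2 * h) • u₁ t‖ ≤ 2 * K₃ * |h| ^ 3 :=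
          (convex_Icc 0 1).norm_sub_sub_two_smul_le hu h₂ h₃ hK₃ ht htp htm
      _ ≤ (2 * K₃ + K₂) * |h| ^ 3 := by gcongr; linarith

end Flow

theorem le_mul_exp_of_two_step_le {u : ℕ → ℝ} {a c : ℝ} {N : ℕ} (ha : 0 ≤ a) (hc : 0 ≤ c)
    (hu : ∀ m, 0 ≤ u m) (hrec : ∀ m, m + 2 ≤ N → u (m + 2) ≤ u m + a * u (m + 1) + c)
    {l : ℕ} (hl : l ≤ N) :
    u l ≤ (max (u 0) (u 1) + l * c) * Real.exp (a * l) := by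
  -- Freezing `v` at `u N` past the end makes the one-step recursion hold for every `m`.
  set v : ℕ → ℝ := fun m => max (u (min m N)) (u (min (m + 1) N)) with hv
  have hv_rec : ∀ m ≥ 0, v (m + 1) ≤ (1 + a) * v m + c := by
    intro m _
    have hv0 : 0 ≤ v m := (hu _).trans (le_max_left _ _)
    rcases le_or_gt (m + 2) N with hm | hm
    · have hvm : v m = max (u m) (u (m + 1)) := by
        simp only [hv, min_eq_left (by omega : m + 1 ≤ N), min_eq_left (by omega : m ≤ N)]
      have hm₀ : u m ≤ v m := hvm ▸ le_max_left _ _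
      have hm₁ : u (m + 1) ≤ v m := hvm ▸ le_max_right _ _
      have hvm1 : v (m + 1) = max (u (m + 1)) (u (m + 2)) := by
        simp only [hv, min_eq_left hm, min_eq_left (by omega : m + 1 ≤ N)]
      rw [hvm1]
      refine max_le (by nlinarith) ((hrec m hm).trans ?_)
      nlinarith [mul_le_mul_of_nonneg_left hm₁ ha]
    · have hN : v (m + 1) = u N := by
        simp [hv, min_eq_right (by omega : N ≤ m + 1), min_eq_right (by omega : N ≤ m + 1 + 1)]
      have : u N ≤ v m := by simp [hv, min_eq_right (by omega : N ≤ m + 1)]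
      nlinarith
  have := discrete_gronwall (c := fun _ => a) (b := fun _ => c)
    ((hu _).trans (le_max_left _ _)) hv_rec (fun _ _ => ha) (fun _ _ => hc) (Nat.zero_le l)
  simp only [Finset.sum_const, Nat.card_Ico, tsub_zero, nsmul_eq_mul] at this
  calc u l ≤ v l := by simp [hv, min_eq_left hl]
    _ ≤ (v 0 + l * c) * Real.exp (l * a) := this
    _ ≤ (max (u 0) (u 1) + l * c) * Real.exp (a * l) := by
      rw [mul_comm (l : ℝ) a]
      gcongr
      rcases N with _ | N <;> simp [hv]

section Leapfrog

variable {d n : ℕ}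
  (f : EuclideanSpace ℝ (Fin d) × EuclideanSpace ℝ (Fin n) → EuclideanSpace ℝ (Fin d))
  (x : EuclideanSpace ℝ (Fin d)) (h : ℝ) (Θ : ℕ → EuclideanSpace ℝ (Fin n))

theorem leap_zero : leap f x h Θ 0 = x := rfl

theorem leap_one : leap f x h Θ 1 = x + h • f (x, Θ 0) := rfl

theorem leap_add_two (l : ℕ) :
    leap f x h Θ (l + 2) = leap f x h Θ l + (2 * h) • f (leap f x h Θ (l + 1), Θ (l + 1)) := by
  rfl

variable {f x h Θ}

theorem norm_sub_leap_le {B ε τ : ℝ} {N : ℕ} {y : ℕ → EuclideanSpace ℝ (Fin d)} (hB : 0 ≤ B)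
    (hh : 0 ≤ h) (hτ : 0 ≤ τ)
    (hf : ∀ a b w, ‖f (a, w) - f (b, w)‖ ≤ B * ‖a - b‖)
    (hy₀ : y 0 = x) (hy₁ : ‖y 1 - (x + h • f (x, Θ 0))‖ ≤ ε)
    (hy : ∀ m, m + 2 ≤ N → ‖y (m + 2) - y m - (2 * h) • f (y (m + 1), Θ (m + 1))‖ ≤ τ)
    {l : ℕ} (hl : l ≤ N) :
    ‖y l - leap f x h Θ l‖ ≤ (ε + l * τ) * Real.exp (2 * h * B * l) := by
  set u : ℕ → ℝ := fun m => ‖y m - leap f x h Θ m‖ with hu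
  have hu_rec : ∀ m, m + 2 ≤ N → u (m + 2) ≤ u m + 2 * h * B * u (m + 1) + τ := by
    intro m hm
    have hsplit : y (m + 2) - leap f x h Θ (m + 2)
        = (y m - leap f x h Θ m)
          + (2 * h) • (f (y (m + 1), Θ (m + 1)) - f (leap f x h Θ (m + 1), Θ (m + 1)))
          + (y (m + 2) - y m - (2 * h) • f (y (m + 1), Θ (m + 1))) := by
      rw [leap_add_two]; module
    calc u (m + 2) ≤ u m + 2 * h * ‖f (y (m + 1), Θ (m + 1)) - f (leap f x h Θ (m + 1), Θ (m + 1))‖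
          + τ := by
          simp only [hu, hsplit]
          refine (norm_add₃_le).trans (add_le_add (add_le_add le_rfl ?_) (hy m hm))
          rw [norm_smul, Real.norm_of_nonneg (by positivity)]
      _ ≤ u m + 2 * h * B * u (m + 1) + τ := by
          have := hf (y (m + 1)) (leap f x h Θ (m + 1)) (Θ (m + 1))
          have h2h : 0 ≤ 2 * h := by positivity
          nlinarith
  have hu₀ : u 0 = 0 := by simp [hu, hy₀, leap_zero]
  have hu₁ : u 1 ≤ ε := by simpa [hu, leap_one] using hy₁
  calc u l ≤ (max (u 0) (u 1) + l * τ) * Real.exp (2 * h * B * l) :=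
        le_mul_exp_of_two_step_le (u := u) (by positivity) hτ (fun _ => norm_nonneg _)
          hu_rec hl
    _ ≤ (ε + l * τ) * Real.exp (2 * h * B * l) := by
        gcongr
        exact max_le (hu₀ ▸ (norm_nonneg _).trans hu₁) hu₁

end Leapfrog

theorem leapfrog_second_order_convergence_general {d n : ℕ}
    (f : EuclideanSpace ℝ (Fin d) × EuclideanSpace ℝ (Fin n) → EuclideanSpace ℝ (Fin d))
    (θ : ℝ → EuclideanSpace ℝ (Fin n))
    (x : EuclideanSpace ℝ (Fin d))
    (z : ℝ → EuclideanSpace ℝ (Fin d))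
    (hf : ContDiff ℝ 2 f)
    (hfb : ∃ B : ℝ, ∀ i : ℕ, 1 ≤ i → i ≤ 2 → ∀ w, ‖iteratedFDeriv ℝ i f w‖ ≤ B)
    (hθ : ContDiff ℝ 2 θ)
    (hz0 : z 0 = x)
    (hz : ∀ t ∈ Set.Icc (0 : ℝ) 1, HasDerivAt z (f (z t, θ t)) t) :
    ∃ C : ℝ, ∀ L : ℕ, 2 ≤ L → ∀ h : ℝ, h = 1 / (L : ℝ) → ∀ l ≤ L,
      ‖z ((l : ℝ) * h) - leap f x h (fun j => θ ((j : ℝ) * h)) l‖ ≤ C * h ^ 2 := by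
  obtain ⟨B, hB⟩ := hfb
  have hB0 : 0 ≤ B := (norm_nonneg _).trans (hB 1 le_rfl one_le_two 0)
  have hLip := norm_sub_le_of_norm_fderiv_le_prodMk_left (hf.differentiable two_ne_zero)
    fun w => by simpa using hB 1 le_rfl one_le_two w
  have hzs : ∀ t ∈ Icc (0 : ℝ) 1, HasDerivWithinAt z (f (z t, θ t)) (Icc 0 1) t :=
    fun t ht => (hz t ht).hasDerivWithinAt
  obtain ⟨K, hK0, hstart, hcentral⟩ := exists_norm_leapfrog_defect_le hzs
    (contDiffOn_comp_of_hasDerivWithinAt (uniqueDiffOn_Icc one_pos) hzs hf hθ)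
  refine ⟨2 * K * Real.exp (2 * B), ?_⟩
  intro L hL h hL_def l hl
  have hh : 0 < h := hL_def ▸ by positivity
  have hLh : (L : ℝ) * h = 1 := by rw [hL_def]; field_simp
  have hmem : ∀ m ≤ L, (m : ℝ) * h ∈ Icc (0 : ℝ) 1 := fun m hm =>
    ⟨by positivity, hLh ▸ mul_le_mul_of_nonneg_right (by exact_mod_cast hm) hh.le⟩
  have hy₁ : ‖z ((1 : ℕ) * h) - (x + h • f (x, θ ((0 : ℕ) * h)))‖ ≤ K * h ^ 2 := by
    have := hstart h (by simpa using hmem 1 (by omega))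
    simpa [hz0, sub_add_eq_sub_sub] using this
  have hy : ∀ m, m + 2 ≤ L → ‖z ((m + 2 : ℕ) * h) - z (m * h)
      - (2 * h) • f (z ((m + 1 : ℕ) * h), θ ((m + 1 : ℕ) * h))‖ ≤ K * h ^ 3 := by
    intro m hm
    have hprev : ((m + 1 : ℕ) : ℝ) * h - h = m * h := by push_cast; ring
    have hnext : ((m + 1 : ℕ) : ℝ) * h + h = (m + 2 : ℕ) * h := by push_cast; ring
    have := hcentral ((m + 1 : ℕ) * h) h (hprev ▸ hmem m (by omega)) (hnext ▸ hmem _ hm)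
    rwa [hprev, hnext, abs_of_pos hh] at this
  have hdefect := norm_sub_leap_le (y := fun m => z (m * h)) (Θ := fun j => θ ((j : ℝ) * h))
    hB0 hh.le (by positivity) hLip (by simpa using hz0) hy₁ hy hl
  have hlh : (l : ℝ) * h ≤ 1 := (hmem l hl).2
  calc _ ≤ (K * h ^ 2 + l * (K * h ^ 3)) * Real.exp (2 * h * B * l) := hdefect
    _ = K * h ^ 2 * (1 + l * h) * Real.exp (2 * B * (l * h)) := by ring_nf
    _ ≤ K * h ^ 2 * 2 * Real.exp (2 * B * 1) := by gcongr; linarith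
    _ = 2 * K * Real.exp (2 * B) * h ^ 2 := by ring_nf

/-- Second-order convergence of the Leapfrog discretization of
`z' = f(z, θ(t))`: `|z(lh) − z_l| ≤ C h²` with `C` independent of `L`. -/
theorem leapfrog_second_order_convergence {d n : ℕ}
    (f : EuclideanSpace ℝ (Fin d) × EuclideanSpace ℝ (Fin n) → EuclideanSpace ℝ (Fin d))
    (θ : ℝ → EuclideanSpace ℝ (Fin n))
    (x : EuclideanSpace ℝ (Fin d))
    (z : ℝ → EuclideanSpace ℝ (Fin d))
    (hf : ContDiff ℝ 2 f)
    (hfb : ∃ B : ℝ, ∀ i : ℕ, 1 ≤ i → i ≤ 2 → ∀ w, ‖iteratedFDeriv ℝ i f w‖ ≤ B)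
    (hθ : ContDiff ℝ 2 θ)
    (hθb : ∃ B : ℝ, ∀ t, ‖iteratedFDeriv ℝ 2 θ t‖ ≤ B)
    (hz0 : z 0 = x)
    (hz : ∀ t ∈ Set.Icc (0 : ℝ) 1, HasDerivAt z (f (z t, θ t)) t) :
    ∃ C : ℝ, ∀ L : ℕ, 2 ≤ L → ∀ h : ℝ, h = 1 / (L : ℝ) → ∀ l ≤ L,
      ‖z ((l : ℝ) * h) - leap f x h (fun j => θ ((j : ℝ) * h)) l‖ ≤ C * h ^ 2 :=
  leapfrog_second_order_convergence_general f θ x z hf hfb hθ hz0 hz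
end
end

section
/- Assume f : ℝ^d × ℝ^n → ℝ^d is continuously differentiable with bounded first derivatives and satisfies the linear-growth bound |f(z,θ)| ≤ C_f(|θ|² + 1)(|z| + 1) for all z, θ; assume g : ℝ^d → ℝ is continuously differentiable with g and ∇g bounded; assume θ : [0,1] → ℝ^n is continuous and bounded; fix x ∈ ℝ^d and y ∈ ℝ. Let z : [0,1] → ℝ^d solve z'(t) = f(z(t), θ(t)), z(0) = x, let p : [0,1] → ℝ^d solve −p'(t)ᵀ = p(t)ᵀ ∂_z f(z(t), θ(t)) with p(1)ᵀ = (g(z(1)) − y)∇g(z(1))ᵀ, and for each integer L ≥ 4 with h = 1/L, θ_l = θ(lh), let z_0,…,z_L be the Leapfrog network states, p_0,…,p_{L−1} the network back-propagator, and p̂_0,…,p̂_{L−1} the back-propagator recursion driven by exact values z(lh). Then there exists a constant M, independent of L, such that for all L ≥ 4: sup_{t∈[0,1]} |z(t)| ≤ M, sup_{t∈[0,1]} |p(t)| ≤ M, max_{0≤l≤L} |z_l| ≤ M, max_{0≤l≤L−1} |p_l| ≤ M, and max_{0≤l≤L−1} |p̂_l| ≤ M. -/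
noncomputable section

/-! The exact trajectories `z` and `p` are continuous on the compact interval `[0, 1]`, hence
bounded. Every discrete quantity obeys a two-step recursion `e (k + 2) ≤ e k + a * e (k + 1)`
with `a = 2 h C`, so it grows at most like `(1 + 2 h C) ^ L ≤ exp (2 C)` because `h L = 1`:
for the Leapfrog states take `e l = ‖z_l‖ + 1` and `C` the linear-growth constant of `f` along
the bounded parameters; for the two back-propagators run the recursion backwards from the
final layer, whose value is bounded through `g` and `∇g`, with `C` the bound on `∂_z f`. -/

theorem le_mul_one_add_pow_of_two_step {a A : ℝ} (ha : 0 ≤ a) (hA : 0 ≤ A) {v : ℕ → ℝ} {N : ℕ}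
    (h0 : v 0 ≤ A) (h1 : v 1 ≤ A * (1 + a))
    (hstep : ∀ k, k + 2 ≤ N → v (k + 2) ≤ v k + a * v (k + 1)) :
    ∀ k ≤ N, v k ≤ A * (1 + a) ^ k := by
  intro k
  induction k using Nat.twoStepInduction with
  | zero => simpa using h0
  | one => exact fun _ => by simpa using h1
  | more k ih₀ ih₁ =>
    intro hk
    have hmono : A * (1 + a) ^ k ≤ A * (1 + a) ^ (k + 1) := by
      gcongr
      · linarith
      · omega
    calc v (k + 2) ≤ v k + a * v (k + 1) := hstep k hk
      _ ≤ A * (1 + a) ^ (k + 1) + a * (A * (1 + a) ^ (k + 1)) := by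
        gcongr
        · exact (ih₀ (by omega)).trans hmono
        · exact ih₁ (by omega)
      _ = A * (1 + a) ^ (k + 2) := by ring

theorem le_mul_one_add_pow_of_backward_two_step {L : ℕ} (hL : 3 ≤ L) {a P : ℝ} (ha : 0 ≤ a)
    (hP : 0 ≤ P) {u : ℕ → ℝ} (hlast : u (L - 1) ≤ P) (hpen : u (L - 2) ≤ a * u (L - 1))
    (hstep : ∀ l, 1 ≤ l → l + 3 ≤ L → u l ≤ u (l + 2) + a * u (l + 1))
    (hfirst : u 0 ≤ (1 / 2) * u 2 + (a / 2) * u 1) :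
    ∀ l < L, u l ≤ P * (1 + a) ^ L := by
  have hc : 1 ≤ 1 + a := by linarith
  have htail : ∀ k ≤ L - 2, u (L - 1 - k) ≤ P * (1 + a) ^ k := by
    refine le_mul_one_add_pow_of_two_step (v := fun k => u (L - 1 - k)) ha hP hlast ?_ ?_
    · rw [show L - 1 - 1 = L - 2 by omega]
      nlinarith
    · intro k hk
      have := hstep (L - 1 - (k + 2)) (by omega) (by omega)
      rwa [show L - 1 - (k + 2) + 2 = L - 1 - k by omega,
        show L - 1 - (k + 2) + 1 = L - 1 - (k + 1) by omega] at this
  have hinner : ∀ l, 1 ≤ l → l < L → u l ≤ P * (1 + a) ^ (L - 1) := fun l hl₁ hlL => by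
    calc u l = u (L - 1 - (L - 1 - l)) := by congr 1; omega
      _ ≤ P * (1 + a) ^ (L - 1 - l) := htail _ (by omega)
      _ ≤ P * (1 + a) ^ (L - 1) := by gcongr; omega
  intro l hlL
  rcases Nat.eq_zero_or_pos l with rfl | hl
  · have h₁ := hinner 1 le_rfl (by omega)
    have h₂ := hinner 2 (by norm_num) (by omega)
    calc u 0 ≤ (1 / 2) * u 2 + (a / 2) * u 1 := hfirst
      _ ≤ (1 / 2) * (P * (1 + a) ^ (L - 1)) + (a / 2) * (P * (1 + a) ^ (L - 1)) := by
        gcongr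
      _ ≤ P * (1 + a) ^ (L - 1) * (1 + a) := by
        have : 0 ≤ P * (1 + a) ^ (L - 1) := by positivity
        nlinarith
      _ = P * (1 + a) ^ L := by rw [mul_assoc, ← pow_succ]; congr 2; omega
  · calc u l ≤ P * (1 + a) ^ (L - 1) := hinner l hl hlL
      _ ≤ P * (1 + a) ^ L := by gcongr; omega

theorem one_add_mul_pow_le_exp {L : ℕ} {h b : ℝ} (hhL : h = 1 / L) (hb : 0 ≤ b) :
    (1 + h * b) ^ L ≤ Real.exp b := by
  have hL : -b ≤ L := by linarith [L.cast_nonneg (α := ℝ)]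
  convert Real.one_sub_div_pow_le_exp_neg hL using 2
  · rw [hhL]; ring
  · ring

theorem one_add_two_mul_pow_le_exp {L : ℕ} {h b : ℝ} (hhL : h = 1 / L) (hb : 0 ≤ b) :
    (1 + 2 * h * b) ^ L ≤ Real.exp (2 * b) := by
  simpa only [mul_left_comm h, mul_assoc] using
    one_add_mul_pow_le_exp hhL (by positivity : 0 ≤ 2 * b)

theorem norm_le_of_backward_two_step {E : Type*} [NormedAddCommGroup E] [NormedSpace ℝ E]
    {L : ℕ} (hL : 3 ≤ L) {h B P : ℝ} (hhL : h = 1 / L) (hB : 0 ≤ B) (hP : 0 ≤ P)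
    {J : ℕ → E →L[ℝ] E} (hJ : ∀ l, ‖J l‖ ≤ B) {q : ℕ → E}
    (hlast : ‖q (L - 1)‖ ≤ P) (hpen : q (L - 2) = (2 * h) • J (L - 1) (q (L - 1)))
    (hstep : ∀ l, 1 ≤ l → l + 3 ≤ L → q l = q (l + 2) + (2 * h) • J (l + 1) (q (l + 1)))
    (hfirst : q 0 = (1 / 2 : ℝ) • q 2 + h • J 1 (q 1)) :
    ∀ l < L, ‖q l‖ ≤ P * Real.exp (2 * B) := by
  have hh : 0 ≤ h := hhL ▸ by positivity
  have hsmul : ∀ (c : ℝ) l v, 0 ≤ c → ‖c • J l v‖ ≤ c * B * ‖v‖ := fun c l v hc => by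
    rw [norm_smul, Real.norm_of_nonneg hc, mul_assoc]
    exact mul_le_mul_of_nonneg_left ((J l).le_of_opNorm_le (hJ l) v) hc
  suffices ∀ l < L, ‖q l‖ ≤ P * (1 + 2 * h * B) ^ L from fun l hl =>
    (this l hl).trans (mul_le_mul_of_nonneg_left (one_add_two_mul_pow_le_exp hhL hB) hP)
  refine le_mul_one_add_pow_of_backward_two_step hL (by positivity) hP hlast ?_ ?_ ?_
  · rw [hpen]
    exact hsmul _ _ _ (by positivity)
  · intro l hl₁ hl₃
    rw [hstep l hl₁ hl₃]
    exact (norm_add_le _ _).trans (add_le_add le_rfl (hsmul _ _ _ (by positivity)))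
  · rw [hfirst]
    refine (norm_add_le _ _).trans (add_le_add ?_ ?_)
    · rw [norm_smul, Real.norm_of_nonneg (by norm_num)]
    · exact (hsmul _ _ _ hh).trans_eq (by ring)

theorem norm_leap_le {d n : ℕ}
    {f : EuclideanSpace ℝ (Fin d) × EuclideanSpace ℝ (Fin n) → EuclideanSpace ℝ (Fin d)}
    (x : EuclideanSpace ℝ (Fin d)) {L : ℕ} {h K : ℝ} (hhL : h = 1 / L) (hK : 0 ≤ K)
    {Θ : ℕ → EuclideanSpace ℝ (Fin n)} (hfΘ : ∀ v l, ‖f (v, Θ l)‖ ≤ K * (‖v‖ + 1)) :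
    ∀ l ≤ L, ‖leap f x h Θ l‖ ≤ (‖x‖ + 1) * Real.exp (2 * K) := by
  have hh : 0 ≤ h := hhL ▸ by positivity
  have hstep : ∀ (c : ℝ) (v : EuclideanSpace ℝ (Fin d)) u l, 0 ≤ c →
      ‖u + c • f (v, Θ l)‖ + 1 ≤ ‖u‖ + 1 + c * K * (‖v‖ + 1) := fun c v u l hc => by
    have hfc := mul_le_mul_of_nonneg_left (hfΘ v l) hc
    have hadd := norm_add_le u (c • f (v, Θ l))
    rw [norm_smul, Real.norm_of_nonneg hc] at hadd
    linarith
  have hfirst : ‖x + h • f (x, Θ 0)‖ + 1 ≤ (‖x‖ + 1) * (1 + 2 * h * K) := by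
    nlinarith [hstep h x x 0 hh, norm_nonneg x, mul_nonneg hh hK]
  have hgrowth := le_mul_one_add_pow_of_two_step (A := ‖x‖ + 1) (N := L)
    (v := fun l => ‖leap f x h Θ l‖ + 1) (by positivity) (by positivity) le_rfl hfirst
    (fun k _ => hstep _ _ _ _ (by positivity))
  intro l hl
  calc ‖leap f x h Θ l‖ ≤ (‖x‖ + 1) * (1 + 2 * h * K) ^ l := by linarith [hgrowth l hl]
    _ ≤ (‖x‖ + 1) * (1 + 2 * h * K) ^ L := by
      gcongr
      nlinarith
    _ ≤ (‖x‖ + 1) * Real.exp (2 * K) := by gcongr; exact one_add_two_mul_pow_le_exp hhL hK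

theorem norm_fderiv_prodMk_left_le {𝕜 E F G : Type*} [NontriviallyNormedField 𝕜]
    [NormedAddCommGroup E] [NormedSpace 𝕜 E] [NormedAddCommGroup F] [NormedSpace 𝕜 F]
    [NormedAddCommGroup G] [NormedSpace 𝕜 G] {f : E × F → G} {e : E} {w : F}
    (hf : DifferentiableAt 𝕜 f (e, w)) :
    ‖fderiv 𝕜 (fun v => f (v, w)) e‖ ≤ ‖fderiv 𝕜 f (e, w)‖ := by
  have hpartial : HasFDerivAt (fun v => f (v, w))
      ((fderiv 𝕜 f (e, w)).comp (ContinuousLinearMap.inl 𝕜 E F)) e :=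
    hf.hasFDerivAt.comp e (hasFDerivAt_prodMk_left e w)
  rw [hpartial.fderiv]
  exact (ContinuousLinearMap.opNorm_comp_le _ _).trans
    (mul_le_of_le_one_right (norm_nonneg _) (ContinuousLinearMap.norm_inl_le_one 𝕜 E F))

theorem norm_adjoint_jacZ_le {d n : ℕ}
    {f : EuclideanSpace ℝ (Fin d) × EuclideanSpace ℝ (Fin n) → EuclideanSpace ℝ (Fin d)}
    (hf : Differentiable ℝ f) {B : ℝ} (hB : ∀ w, ‖fderiv ℝ f w‖ ≤ B)
    (v : EuclideanSpace ℝ (Fin d)) (w : EuclideanSpace ℝ (Fin n)) :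
    ‖ContinuousLinearMap.adjoint (jacZ f v w)‖ ≤ B := by
  rw [LinearIsometryEquiv.norm_map]
  exact (norm_fderiv_prodMk_left_le (hf _)).trans (hB _)

theorem norm_smul_gradient_le {E : Type*} [NormedAddCommGroup E] [InnerProductSpace ℝ E]
    [CompleteSpace E] {g : E → ℝ} {B : ℝ} (hg : ∀ w, |g w| ≤ B ∧ ‖gradient g w‖ ≤ B)
    (y : ℝ) (v : E) : ‖(2 * (g v - y)) • gradient g v‖ ≤ 2 * (B + |y|) * B := by
  have hB : 0 ≤ B := (abs_nonneg _).trans (hg v).1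
  have hgy : |g v - y| ≤ B + |y| := (abs_sub _ _).trans (add_le_add (hg v).1 le_rfl)
  rw [norm_smul, Real.norm_eq_abs, abs_mul, abs_two]
  exact mul_le_mul (by linarith) (hg v).2 (norm_nonneg _) (by positivity)

theorem apriori_boundedness_general {d n : ℕ}
    (f : EuclideanSpace ℝ (Fin d) × EuclideanSpace ℝ (Fin n) → EuclideanSpace ℝ (Fin d))
    (g : EuclideanSpace ℝ (Fin d) → ℝ)
    (θ : ℝ → EuclideanSpace ℝ (Fin n))
    (x : EuclideanSpace ℝ (Fin d)) (y : ℝ)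
    (z p : ℝ → EuclideanSpace ℝ (Fin d))
    (hf : ContDiff ℝ 1 f)
    (hfb : ∃ B : ℝ, ∀ w, ‖fderiv ℝ f w‖ ≤ B)
    (hfgrow : ∃ Cf : ℝ, 0 < Cf ∧ ∀ zv : EuclideanSpace ℝ (Fin d),
      ∀ w : EuclideanSpace ℝ (Fin n), ‖f (zv, w)‖ ≤ Cf * (‖w‖ ^ 2 + 1) * (‖zv‖ + 1))
    (hgb : ∃ B : ℝ, ∀ w, |g w| ≤ B ∧ ‖gradient g w‖ ≤ B)
    (hθb : ∃ B : ℝ, ∀ t, ‖θ t‖ ≤ B)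
    (hz : ∀ t ∈ Set.Icc (0 : ℝ) 1, HasDerivAt z (f (z t, θ t)) t)
    (hp : ∀ t ∈ Set.Icc (0 : ℝ) 1, HasDerivAt p
      (-(ContinuousLinearMap.adjoint (jacZ f (z t) (θ t))) (p t)) t) :
    ∃ M : ℝ, ∀ L : ℕ, 4 ≤ L → ∀ h : ℝ, h = 1 / (L : ℝ) →
      ∀ Θ : ℕ → EuclideanSpace ℝ (Fin n), Θ = (fun j : ℕ => θ ((j : ℝ) * h)) →
      ∀ pd phat : ℕ → EuclideanSpace ℝ (Fin d),
      -- back-propagator of the network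
      pd (L - 1) = (2 * (g (leap f x h Θ L) - y)) • gradient g (leap f x h Θ L) →
      pd (L - 2) = (2 * h) • (ContinuousLinearMap.adjoint
        (jacZ f (leap f x h Θ (L - 1)) (Θ (L - 1)))) (pd (L - 1)) →
      (∀ l, 1 ≤ l → l + 3 ≤ L → pd l =
        pd (l + 2) + (2 * h) • (ContinuousLinearMap.adjoint
          (jacZ f (leap f x h Θ (l + 1)) (Θ (l + 1)))) (pd (l + 1))) →
      pd 0 = (1 / 2 : ℝ) • pd 2 + h • (ContinuousLinearMap.adjoint
        (jacZ f (leap f x h Θ 1) (Θ 1))) (pd 1) →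
      -- back-propagator driven by the exact trajectory
      phat (L - 1) = (2 * (g (z 1) - y)) • gradient g (z 1) →
      phat (L - 2) = (2 * h) • (ContinuousLinearMap.adjoint
        (jacZ f (z (((L : ℝ) - 1) * h)) (Θ (L - 1)))) (phat (L - 1)) →
      (∀ l, 1 ≤ l → l + 3 ≤ L → phat l =
        phat (l + 2) + (2 * h) • (ContinuousLinearMap.adjoint
          (jacZ f (z (((l : ℝ) + 1) * h)) (Θ (l + 1)))) (phat (l + 1))) →
      phat 0 = (1 / 2 : ℝ) • phat 2 + h • (ContinuousLinearMap.adjoint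
        (jacZ f (z h) (Θ 1))) (phat 1) →
      (∀ t ∈ Set.Icc (0 : ℝ) 1, ‖z t‖ ≤ M) ∧
      (∀ t ∈ Set.Icc (0 : ℝ) 1, ‖p t‖ ≤ M) ∧
      (∀ l ≤ L, ‖leap f x h Θ l‖ ≤ M) ∧
      (∀ l < L, ‖pd l‖ ≤ M) ∧
      (∀ l < L, ‖phat l‖ ≤ M) := by
  obtain ⟨B, hB⟩ := hfb
  obtain ⟨Cf, hCf, hfCf⟩ := hfgrow
  obtain ⟨Bg, hBg⟩ := hgb
  obtain ⟨Bθ, hBθ⟩ := hθb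
  have hB0 : 0 ≤ B := (norm_nonneg _).trans (hB 0)
  have hjac := norm_adjoint_jacZ_le (hf.differentiable one_ne_zero) hB
  have hP : 0 ≤ 2 * (Bg + |y|) * Bg := by
    have := (abs_nonneg _).trans (hBg 0).1
    positivity
  obtain ⟨K, hK, hfK⟩ : ∃ K, 0 ≤ K ∧ ∀ v t, ‖f (v, θ t)‖ ≤ K * (‖v‖ + 1) :=
    ⟨Cf * (Bθ ^ 2 + 1), by positivity, fun v t => (hfCf v (θ t)).trans <| by
      have : ‖θ t‖ ^ 2 ≤ Bθ ^ 2 := pow_le_pow_left₀ (norm_nonneg _) (hBθ t) 2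
      gcongr⟩
  obtain ⟨Mz, hMz⟩ := isCompact_Icc.exists_bound_of_continuousOn
    fun t ht => (hz t ht).continuousAt.continuousWithinAt
  obtain ⟨Mp, hMp⟩ := isCompact_Icc.exists_bound_of_continuousOn
    fun t ht => (hp t ht).continuousAt.continuousWithinAt
  refine ⟨max (max Mz Mp)
    (max ((‖x‖ + 1) * Real.exp (2 * K)) (2 * (Bg + |y|) * Bg * Real.exp (2 * B))), ?_⟩
  intro L hL h hhL Θ hΘ pd phat hpdL1 hpdL2 hpdrec hpd0 hhatL1 hhatL2 hhatrec hhat0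
  have hfΘ : ∀ v l, ‖f (v, Θ l)‖ ≤ K * (‖v‖ + 1) := fun v l => hΘ ▸ hfK v _
  have hleap := norm_leap_le x hhL hK hfΘ
  have hpd := norm_le_of_backward_two_step
    (J := fun l => ContinuousLinearMap.adjoint (jacZ f (leap f x h Θ l) (Θ l))) (by omega) hhL
    hB0 hP (fun _ => hjac _ _) (hpdL1 ▸ norm_smul_gradient_le hBg y _) hpdL2 hpdrec hpd0
  have hphat := norm_le_of_backward_two_step
    (J := fun l => ContinuousLinearMap.adjoint (jacZ f (z (l * h)) (Θ l))) (by omega) hhL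
    hB0 hP (fun _ => hjac _ _) (hhatL1 ▸ norm_smul_gradient_le hBg y _)
    (by simpa only [Nat.cast_sub (by omega : 1 ≤ L), Nat.cast_one] using hhatL2)
    (by simpa only [Nat.cast_succ] using hhatrec)
    (by simpa only [Nat.cast_one, one_mul] using hhat0)
  exact ⟨fun t ht => (hMz t ht).trans (by simp), fun t ht => (hMp t ht).trans (by simp),
    fun l hl => (hleap l hl).trans (by simp), fun l hl => (hpd l hl).trans (by simp),
    fun l hl => (hphat l hl).trans (by simp)⟩

/-- A-priori boundedness: the exact flow `z`, the exact adjoint `p`, the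
Leapfrog states, the network back-propagator, and the exact-trajectory back-propagator are
all bounded uniformly in the number of layers `L`. -/
theorem apriori_boundedness {d n : ℕ}
    (f : EuclideanSpace ℝ (Fin d) × EuclideanSpace ℝ (Fin n) → EuclideanSpace ℝ (Fin d))
    (g : EuclideanSpace ℝ (Fin d) → ℝ)
    (θ : ℝ → EuclideanSpace ℝ (Fin n))
    (x : EuclideanSpace ℝ (Fin d)) (y : ℝ)
    (z p : ℝ → EuclideanSpace ℝ (Fin d))
    (hf : ContDiff ℝ 1 f)
    (hfb : ∃ B : ℝ, ∀ w, ‖fderiv ℝ f w‖ ≤ B)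
    (hfgrow : ∃ Cf : ℝ, 0 < Cf ∧ ∀ zv : EuclideanSpace ℝ (Fin d),
      ∀ w : EuclideanSpace ℝ (Fin n), ‖f (zv, w)‖ ≤ Cf * (‖w‖ ^ 2 + 1) * (‖zv‖ + 1))
    (hg : ContDiff ℝ 1 g)
    (hgb : ∃ B : ℝ, ∀ w, |g w| ≤ B ∧ ‖gradient g w‖ ≤ B)
    (hθc : Continuous θ)
    (hθb : ∃ B : ℝ, ∀ t, ‖θ t‖ ≤ B)
    (hz0 : z 0 = x)
    (hz : ∀ t ∈ Set.Icc (0 : ℝ) 1, HasDerivAt z (f (z t, θ t)) t)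
    (hp : ∀ t ∈ Set.Icc (0 : ℝ) 1, HasDerivAt p
      (-(ContinuousLinearMap.adjoint (jacZ f (z t) (θ t))) (p t)) t)
    (hp1 : p 1 = (g (z 1) - y) • gradient g (z 1)) :
    ∃ M : ℝ, ∀ L : ℕ, 4 ≤ L → ∀ h : ℝ, h = 1 / (L : ℝ) →
      ∀ Θ : ℕ → EuclideanSpace ℝ (Fin n), Θ = (fun j : ℕ => θ ((j : ℝ) * h)) →
      ∀ pd phat : ℕ → EuclideanSpace ℝ (Fin d),
      -- back-propagator of the network
      pd (L - 1) = (2 * (g (leap f x h Θ L) - y)) • gradient g (leap f x h Θ L) →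
      pd (L - 2) = (2 * h) • (ContinuousLinearMap.adjoint
        (jacZ f (leap f x h Θ (L - 1)) (Θ (L - 1)))) (pd (L - 1)) →
      (∀ l, 1 ≤ l → l + 3 ≤ L → pd l =
        pd (l + 2) + (2 * h) • (ContinuousLinearMap.adjoint
          (jacZ f (leap f x h Θ (l + 1)) (Θ (l + 1)))) (pd (l + 1))) →
      pd 0 = (1 / 2 : ℝ) • pd 2 + h • (ContinuousLinearMap.adjoint
        (jacZ f (leap f x h Θ 1) (Θ 1))) (pd 1) →
      -- back-propagator driven by the exact trajectory
      phat (L - 1) = (2 * (g (z 1) - y)) • gradient g (z 1) →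
      phat (L - 2) = (2 * h) • (ContinuousLinearMap.adjoint
        (jacZ f (z (((L : ℝ) - 1) * h)) (Θ (L - 1)))) (phat (L - 1)) →
      (∀ l, 1 ≤ l → l + 3 ≤ L → phat l =
        phat (l + 2) + (2 * h) • (ContinuousLinearMap.adjoint
          (jacZ f (z (((l : ℝ) + 1) * h)) (Θ (l + 1)))) (phat (l + 1))) →
      phat 0 = (1 / 2 : ℝ) • phat 2 + h • (ContinuousLinearMap.adjoint
        (jacZ f (z h) (Θ 1))) (phat 1) →
      (∀ t ∈ Set.Icc (0 : ℝ) 1, ‖z t‖ ≤ M) ∧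
      (∀ t ∈ Set.Icc (0 : ℝ) 1, ‖p t‖ ≤ M) ∧
      (∀ l ≤ L, ‖leap f x h Θ l‖ ≤ M) ∧
      (∀ l < L, ‖pd l‖ ≤ M) ∧
      (∀ l < L, ‖phat l‖ ≤ M) :=
  apriori_boundedness_general f g θ x y z p hf hfb hfgrow hgb hθb hz hp
end
end
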